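/- For d×d max-plus matrices M and H and all k ≥ 2, the k-th semidirect power satisfies (M,H)^k = ( (M ⊗ ⊕_{i=0}^{k-1} H^{⊗i}) ⊕ (H ⊗ ⊕_{i=0}^{k-2} H^{⊗i}), H^{∘k} ), where H^{⊗0} = I is the tropical identity matrix. -/

import Mathlib

open Finset

abbrev Rmax : Type := WithBot ℝ

/-- Tropical (max-plus) matrix product. -/
noncomputable def trMul {l m n : ℕ} (A : Matrix (Fin l) (Fin m) Rmax) (B : Matrix (Fin m) (Fin n) Rmax) :
    Matrix (Fin l) (Fin n) Rmax :=
  fun i j => univ.sup fun k => A i k + B k j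

/-- Entrywise tropical sum (max) of matrices. -/
noncomputable def trSup {m n : ℕ} (A B : Matrix (Fin m) (Fin n) Rmax) : Matrix (Fin m) (Fin n) Rmax :=
  fun i j => A i j ⊔ B i j

/-- Tropical identity matrix. -/
noncomputable def trId (d : ℕ) : Matrix (Fin d) (Fin d) Rmax := fun i j => if i = j then 0 else ⊥

/-- Tropical matrix powers, `trPow A 0 = I`. -/
noncomputable def trPow {d : ℕ} (A : Matrix (Fin d) (Fin d) Rmax) : ℕ → Matrix (Fin d) (Fin d) Rmax
  | 0 => trId d
  | n + 1 => trMul (trPow A n) A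

/-- Adjoint product `A ∘ B = A ⊕ B ⊕ (A ⊗ B)`. -/
noncomputable def adj {d : ℕ} (A B : Matrix (Fin d) (Fin d) Rmax) : Matrix (Fin d) (Fin d) Rmax :=
  trSup (trSup A B) (trMul A B)

/-- Adjoint powers: `adjPow A n = A^{∘n}` for `n ≥ 1` (value at 0 is junk `A`). -/
noncomputable def adjPow {d : ℕ} (A : Matrix (Fin d) (Fin d) Rmax) : ℕ → Matrix (Fin d) (Fin d) Rmax
  | 0 => A
  | 1 => A
  | n + 2 => adj (adjPow A (n + 1)) A

/-- Semidirect product of pairs: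
`(M,G)·(A,H) = (M ⊕ A ⊕ H ⊕ (M ⊗ H), G ∘ H)`. -/
noncomputable def sd {d : ℕ} (p q : Matrix (Fin d) (Fin d) Rmax × Matrix (Fin d) (Fin d) Rmax) :
    Matrix (Fin d) (Fin d) Rmax × Matrix (Fin d) (Fin d) Rmax :=
  (trSup (trSup (trSup p.1 q.1) q.2) (trMul p.1 q.2), adj p.2 q.2)

/-- Semidirect powers: `sdPow p n = p^n` for `n ≥ 1` (value at 0 is junk `p`). -/
noncomputable def sdPow {d : ℕ} (p : Matrix (Fin d) (Fin d) Rmax × Matrix (Fin d) (Fin d) Rmax) :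
    ℕ → Matrix (Fin d) (Fin d) Rmax × Matrix (Fin d) (Fin d) Rmax
  | 0 => p
  | 1 => p
  | n + 2 => sd (sdPow p (n + 1)) p

/-- Maximum cycle mean `λ(F)`: maximum over cycles `(c 0, c 1, …, c k, c 0)` of
the average arc weight. -/
noncomputable def mcm {d : ℕ} (F : Matrix (Fin d) (Fin d) Rmax) : Rmax :=
  univ.sup fun kc : Σ k : Fin d, Fin (k.1 + 1) → Fin d =>
    (∑ i, F (kc.2 i) (kc.2 (i + 1))).map fun w => w / ((kc.1 : ℕ) + 1)

/-- Metric matrix `A⁺ = A ⊕ A^{⊗2} ⊕ ⋯ ⊕ A^{⊗d}`. -/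
noncomputable def metric {d : ℕ} (A : Matrix (Fin d) (Fin d) Rmax) : Matrix (Fin d) (Fin d) Rmax :=
  fun i j => (Finset.Icc 1 d).sup fun k => trPow A k i j

/-- Kleene star `A* = I ⊕ A ⊕ ⋯ ⊕ A^{⊗(d-1)}`. -/
noncomputable def kstar {d : ℕ} (A : Matrix (Fin d) (Fin d) Rmax) : Matrix (Fin d) (Fin d) Rmax :=
  fun i j => (Finset.range d).sup fun k => trPow A k i j

/-- `F` is irreducible: its weighted digraph is strongly connected. -/
def TrIrreducible {d : ℕ} (F : Matrix (Fin d) (Fin d) Rmax) : Prop :=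
  ∀ i j : Fin d, Relation.ReflTransGen (fun a b => F a b ≠ ⊥) i j

/-!
Writing `S k = trPowSup H k = I ⊕ H ⊕ ⋯ ⊕ H^{⊗(k-1)}`, one has `S (k+1) = I ⊕ S k ⊗ H`,
hence `A ⊗ S (k+1) = A ⊕ (A ⊗ S k) ⊗ H` for every `A`. Multiplying
`(M ⊗ S (n+1) ⊕ H ⊗ S n, H^{∘(n+1)})` on the right by `(M, H)` therefore produces
`M ⊗ S (n+2) ⊕ H ⊗ S (n+1)` together with the smaller terms `M ⊗ S (n+1)` and `H ⊗ S n`, which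
are absorbed since `S` is increasing. The induction starts at `n = 0` with
`M ⊗ I ⊕ H ⊗ S 0 = M`, `S 0` being the tropical zero matrix.
-/

section WithBot

variable {α ι : Type*} [LinearOrder α] [Add α]

theorem WithBot.add_finset_sup [AddLeftMono α] (s : Finset ι) (f : ι → WithBot α)
    (a : WithBot α) :
    a + s.sup f = s.sup fun x => a + f x :=
  Finset.apply_sup_eq_sup_comp (a + ·) (add_max a) (WithBot.add_bot a)

theorem WithBot.finset_sup_add [AddRightMono α] (s : Finset ι) (f : ι → WithBot α)
    (a : WithBot α) :
    s.sup f + a = s.sup fun x => f x + a :=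
  Finset.apply_sup_eq_sup_comp (· + a) (max_add · · a) (WithBot.bot_add a)

end WithBot

section TropicalMatrix

variable {d : ℕ}

theorem trSup_assoc (A B C : Matrix (Fin d) (Fin d) Rmax) :
    trSup (trSup A B) C = trSup A (trSup B C) := by
  funext i j
  exact sup_assoc _ _ _

theorem trMul_trSup_left (A B C : Matrix (Fin d) (Fin d) Rmax) :
    trMul (trSup A B) C = trSup (trMul A C) (trMul B C) := by
  funext i j
  simp only [trMul, trSup, max_add]
  rw [← Finset.sup_sup]
  rfl

theorem trMul_trSup_right (A B C : Matrix (Fin d) (Fin d) Rmax) :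
    trMul A (trSup B C) = trSup (trMul A B) (trMul A C) := by
  funext i j
  simp only [trMul, trSup, add_max]
  rw [← Finset.sup_sup]
  rfl

theorem trMul_trId_right (A : Matrix (Fin d) (Fin d) Rmax) : trMul A (trId d) = A := by
  funext i j
  refine le_antisymm (Finset.sup_le fun k _ => ?_) ?_
  · by_cases h : k = j <;> simp [trId, h]
  · exact le_of_eq_of_le (by simp [trId]) (Finset.le_sup (f := fun k => A i k + trId d k j)
      (Finset.mem_univ j))

theorem trMul_assoc (A B C : Matrix (Fin d) (Fin d) Rmax) :
    trMul (trMul A B) C = trMul A (trMul B C) := by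
  funext i j
  simp only [trMul, WithBot.finset_sup_add, WithBot.add_finset_sup, add_assoc]
  exact Finset.sup_comm _ _ _

end TropicalMatrix

section PowSup

variable {d : ℕ} (A H : Matrix (Fin d) (Fin d) Rmax)

noncomputable def trPowSup (k : ℕ) : Matrix (Fin d) (Fin d) Rmax :=
  fun i j => (Finset.range k).sup fun t => trPow H t i j

theorem trPowSup_one : trPowSup H 1 = trId d := by
  funext i j
  simp [trPowSup, trPow]

theorem trPowSup_succ (k : ℕ) : trPowSup H (k + 1) = trSup (trPowSup H k) (trPow H k) := by
  funext i j
  simp only [trPowSup, trSup, Finset.range_add_one, Finset.sup_insert, sup_comm]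

theorem trPowSup_succ_eq_trId_sup (k : ℕ) :
    trPowSup H (k + 1) = trSup (trId d) (trMul (trPowSup H k) H) := by
  induction k with
  | zero =>
    funext i j
    simp [trPowSup, trSup, trMul, trPow]
  | succ k ih =>
    conv_lhs => rw [trPowSup_succ, ih]
    rw [trPowSup_succ H k, trMul_trSup_left, trSup_assoc]
    rfl

theorem trMul_trPowSup_succ (k : ℕ) :
    trMul A (trPowSup H (k + 1)) = trSup A (trMul (trMul A (trPowSup H k)) H) := by
  rw [trPowSup_succ_eq_trId_sup, trMul_trSup_right, trMul_trId_right, trMul_assoc]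

theorem trMul_trPowSup_le_succ (k : ℕ) (i j : Fin d) :
    trMul A (trPowSup H k) i j ≤ trMul A (trPowSup H (k + 1)) i j :=
  Finset.sup_mono_fun fun _ _ => add_le_add_right
    (Finset.sup_mono (Finset.range_subset_range.2 k.le_succ)) _

theorem sdPow_succ_eq (n : ℕ) :
    sdPow (A, H) (n + 1) =
      (trSup (trMul A (trPowSup H (n + 1))) (trMul H (trPowSup H n)), adjPow H (n + 1)) := by
  induction n with
  | zero =>
    refine Prod.ext ?_ rfl
    show A = trSup (trMul A (trPowSup H 1)) (trMul H (trPowSup H 0))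
    rw [trPowSup_one, trMul_trId_right]
    funext i j
    simp [trSup, trMul, trPowSup]
  | succ n ih =>
    show sd (sdPow (A, H) (n + 1)) (A, H) = _
    rw [ih]
    refine Prod.ext ?_ rfl
    funext i j
    have hA := congrFun₂ (trMul_trPowSup_succ A H (n + 1)) i j
    have hH := congrFun₂ (trMul_trPowSup_succ H H n) i j
    have hA_le := trMul_trPowSup_le_succ A H (n + 1) i j
    have hH_le := trMul_trPowSup_le_succ H H n i j
    simp only [sd, trMul_trSup_left, trSup] at hA hH ⊢
    calc _ = (trMul A (trPowSup H (n + 1)) i j ⊔ trMul H (trPowSup H n) i j) ⊔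
            ((A i j ⊔ trMul (trMul A (trPowSup H (n + 1))) H i j) ⊔
              (H i j ⊔ trMul (trMul H (trPowSup H n)) H i j)) := by ac_rfl
      _ = _ := by rw [← hA, ← hH]; exact sup_eq_right.2 (sup_le_sup hA_le hH_le)

end PowSup

theorem sdPow_eq {d : ℕ} (M H : Matrix (Fin d) (Fin d) Rmax) (k : ℕ) (hk : 2 ≤ k) :
    sdPow (M, H) k =
      (trSup (trMul M (fun i j => (Finset.range k).sup fun t => trPow H t i j))
        (trMul H (fun i j => (Finset.range (k - 1)).sup fun t => trPow H t i j)),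
       adjPow H k) := by
  obtain ⟨n, rfl⟩ : ∃ n, k = n + 1 := ⟨k - 1, by omega⟩
  rw [Nat.add_sub_cancel]
  exact sdPow_succ_eq M H n
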